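/- arXiv:2105.05366 — 2 statements merged into one kernel-verified Lean document; each statement's English description precedes it below -/
import Mathlib

section
/- For a permutation π of Fin m, let T(π) denote the minimum total end-effector travel over all valid plans for π in the one-dimensional pick-n-swap model. Then the normalized expected optimal travel converges to 1/3: lim_{m → ∞} (1/(m! · m²)) · Σ_{π ∈ Equiv.Perm (Fin m)} T(π) = 1/3. -/
/-- One pick-n-swap operation at cell `ℓ`: the state `(a, h)` becomes
`(Function.update a ℓ h, a ℓ)`. -/
def pnsStep {γ β : Type*} [DecidableEq γ]
    (st : (γ → Option β) × Option β) (ℓ : γ) : (γ → Option β) × Option β :=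
  (Function.update st.1 ℓ st.2, st.1 ℓ)

/-- Execute a plan (a list of cells) from a starting state. -/
def pnsExec {γ β : Type*} [DecidableEq γ]
    (start : (γ → Option β) × Option β) (plan : List γ) : (γ → Option β) × Option β :=
  plan.foldl pnsStep start

/-- A plan is valid for the permutation `π` (π i is the label of the item initially
at cell i) if executing it transforms the initial state into the sorted goal state. -/
def ValidPlan {α : Type*} [DecidableEq α] (π : Equiv.Perm α) (plan : List α) : Prop :=
  pnsExec (fun i => some (π i), none) plan = (fun i => some i, none)

/-- Total end-effector travel of a 1D plan `p₁, …, p_N`: the sum of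
`|p_{j+1} - p_j|` for `j = 0, …, N`, where `p₀ = p_{N+1} = 0` is the rest position. -/
def travel1D {m : ℕ} (hm : 0 < m) (plan : List (Fin m)) : ℤ :=
  ((((⟨0, hm⟩ : Fin m) :: plan).zip (plan ++ [(⟨0, hm⟩ : Fin m)])).map
    (fun pq => |((pq.1 : ℕ) : ℤ) - ((pq.2 : ℕ) : ℤ)|)).sum

/-- `T(π)`: the minimum total end-effector travel over all valid plans for `π`. -/
noncomputable def optTravel1D {m : ℕ} (hm : 0 < m) (π : Equiv.Perm (Fin m)) : ℝ :=
  sInf {d : ℝ | ∃ plan : List (Fin m), ValidPlan π plan ∧ ((travel1D hm plan : ℤ) : ℝ) = d}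


/-!
Every label `π i` has to be carried from cell `i` to cell `π i`, so a valid plan travels at least
`∑ i, |i - π i|`; formally, the potential "distance of every label from its home, the held one
measured from the arm" is preserved by a pick-n-swap and changes by at most the distance of a
move. Conversely, sweeping from left to right and resolving each cycle by always carrying the
held label home spends exactly that potential, plus at most `m - 1` for the empty-handed moves
and `m - 1` for the return. Averaged over `π`, `∑ i, |i - π i|` is `(m ^ 2 - 1) / 3`, which gives
the limit `1 / 3`.
-/

namespace PickNSwap

open Equiv Finset Nat

section State

variable {α : Type*} [DecidableEq α]

lemma pnsExec_cons {β : Type*} (st : (α → Option β) × Option β) (ℓ : α) (plan : List α) :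
    pnsExec st (ℓ :: plan) = pnsExec (pnsStep st ℓ) plan := rfl

lemma pnsExec_append {β : Type*} (st : (α → Option β) × Option β) (plan₁ plan₂ : List α) :
    pnsExec st (plan₁ ++ plan₂) = pnsExec (pnsExec st plan₁) plan₂ :=
  List.foldl_append

lemma pnsStep_pnsStep_self {β : Type*} (st : (α → Option β) × Option β) (ℓ : α) :
    pnsStep (pnsStep st ℓ) ℓ = st := by
  simp [pnsStep]

def resting (ρ : Perm α) : (α → Option α) × Option α :=
  (fun c => some (ρ c), none)

lemma validPlan_iff (π : Perm α) (plan : List α) :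
    ValidPlan π plan ↔ pnsExec (resting π) plan = resting 1 := Iff.rfl

/-- Carrying the label `ρ i` home leaves the same state as if it had been in place from the
start. -/
lemma pnsStep_pnsStep_resting (ρ : Perm α) {i : α} (hi : ρ i ≠ i) :
    pnsStep (pnsStep (resting ρ) i) (ρ i) =
      pnsStep (resting (swap (ρ i) (ρ (ρ i)) * ρ)) i := by
  simp only [pnsStep, resting, Perm.mul_apply, swap_apply_left, Function.update_of_ne hi,
    Prod.mk.injEq, and_true]
  funext c
  by_cases hc : c = ρ i
  · subst hc; simp [Function.update_of_ne hi]
  by_cases hci : c = i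
  · subst hci; simp [Function.update_of_ne hc]
  · have h₁ : ρ c ≠ ρ i := fun h => hci (ρ.injective h)
    have h₂ : ρ c ≠ ρ (ρ i) := fun h => hc (ρ.injective h)
    simp [Function.update_of_ne hc, Function.update_of_ne hci, swap_apply_of_ne_of_ne h₁ h₂]

end State

variable {m : ℕ}

def travelFrom : Fin m → List (Fin m) → ℤ
  | _, [] => 0
  | x, y :: plan => |(x : ℤ) - y| + travelFrom y plan

@[simp] lemma travelFrom_nil (x : Fin m) : travelFrom x [] = 0 := rfl

@[simp] lemma travelFrom_cons (x y : Fin m) (plan : List (Fin m)) :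
    travelFrom x (y :: plan) = |(x : ℤ) - y| + travelFrom y plan := rfl

lemma travelFrom_append (x : Fin m) (plan₁ plan₂ : List (Fin m)) :
    travelFrom x (plan₁ ++ plan₂) = travelFrom x plan₁ + travelFrom (plan₁.getLastD x) plan₂ := by
  induction plan₁ generalizing x with
  | nil => simp
  | cons y plan ih =>
    rw [List.cons_append, travelFrom_cons, travelFrom_cons, ih, List.getLastD_cons, add_assoc]

lemma travel1D_eq_travelFrom (hm : 0 < m) (plan : List (Fin m)) :
    travel1D hm plan = travelFrom ⟨0, hm⟩ plan + (plan.getLastD ⟨0, hm⟩ : ℤ) := by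
  have hzip : ∀ (x : Fin m) (l : List (Fin m)),
      (((x :: l).zip (l ++ [(⟨0, hm⟩ : Fin m)])).map
        (fun pq => |((pq.1 : ℕ) : ℤ) - ((pq.2 : ℕ) : ℤ)|)).sum = travelFrom x (l ++ [⟨0, hm⟩]) := by
    intro x l
    induction l generalizing x with
    | nil => simp
    | cons y l ih => simp [ih]
  rw [travel1D, hzip, travelFrom_append]
  simp

def totalDisplacement (π : Perm (Fin m)) : ℤ :=
  ∑ i : Fin m, |(i : ℤ) - π i|

@[simp] lemma totalDisplacement_one : totalDisplacement (1 : Perm (Fin m)) = 0 := by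
  simp [totalDisplacement]

def displacement (c : Fin m) : Option (Fin m) → ℤ
  | none => 0
  | some j => |(c : ℤ) - j|

def potential (st : (Fin m → Option (Fin m)) × Option (Fin m)) (x : Fin m) : ℤ :=
  ∑ c, displacement c (st.1 c) + displacement x st.2

lemma potential_resting (ρ : Perm (Fin m)) (x : Fin m) :
    potential (resting ρ) x = totalDisplacement ρ := by
  simp [potential, resting, displacement, totalDisplacement]

lemma potential_pnsStep (st : (Fin m → Option (Fin m)) × Option (Fin m)) (ℓ : Fin m) :
    potential (pnsStep st ℓ) ℓ = potential st ℓ := by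
  obtain ⟨a, h⟩ := st
  simp only [potential, pnsStep]
  simp_rw [Function.apply_update (fun c => displacement c) a ℓ h]
  rw [sum_update_of_mem (mem_univ ℓ), Fintype.sum_eq_add_sum_compl ℓ, compl_eq_univ_sdiff]
  ring

lemma potential_le (st : (Fin m → Option (Fin m)) × Option (Fin m)) (x y : Fin m) :
    potential st x ≤ |(x : ℤ) - y| + potential st y := by
  obtain ⟨a, _ | j⟩ := st
  · simp [potential, displacement]
  · simp only [potential, displacement]
    linarith [abs_sub_le (x : ℤ) y j]

lemma potential_of_snd_eq_some {st : (Fin m → Option (Fin m)) × Option (Fin m)} {y : Fin m}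
    (h : st.2 = some y) (x : Fin m) :
    potential st x = |(x : ℤ) - y| + potential st y := by
  simp [potential, displacement, h]
  ring

lemma potential_le_travelFrom (plan : List (Fin m))
    (st : (Fin m → Option (Fin m)) × Option (Fin m)) (x : Fin m) :
    potential st x ≤ travelFrom x plan + potential (pnsExec st plan) (plan.getLastD x) := by
  induction plan generalizing st x with
  | nil => simp [pnsExec]
  | cons y plan ih =>
    have := ih (pnsStep st y) y
    rw [potential_pnsStep] at this
    rw [travelFrom_cons, pnsExec_cons, List.getLastD_cons]
    linarith [potential_le st x y]

theorem totalDisplacement_le_travel1D (hm : 0 < m) {π : Perm (Fin m)} {plan : List (Fin m)}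
    (hplan : ValidPlan π plan) : totalDisplacement π ≤ travel1D hm plan := by
  have h := potential_le_travelFrom plan (resting π) ⟨0, hm⟩
  rw [(validPlan_iff π plan).1 hplan, potential_resting, potential_resting,
    totalDisplacement_one] at h
  rw [travel1D_eq_travelFrom]
  omega

/-- Picking up at `i` and then always carrying the held label to its home cell resolves the
cycle of `i`, and every move spends exactly the potential it releases. -/
theorem exists_plan_resolving_cycle (ρ : Perm (Fin m)) (i x : Fin m) :
    ∃ (plan : List (Fin m)) (ρ' : Perm (Fin m)),
      pnsExec (pnsStep (resting ρ) i) plan = resting ρ' ∧ ρ'.support ⊆ ρ.support.erase i ∧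
        plan.getLastD x = i ∧
        travelFrom x plan + totalDisplacement ρ' = potential (pnsStep (resting ρ) i) x := by
  induction hk : #ρ.support using Nat.strong_induction_on generalizing ρ x with
  | _ k ih =>
  have hhand : potential (pnsStep (resting ρ) i) x =
      |(x : ℤ) - ρ i| + potential (pnsStep (resting ρ) i) (ρ i) :=
    potential_of_snd_eq_some rfl x
  by_cases hi : ρ i = i
  · refine ⟨[i], ρ, pnsStep_pnsStep_self _ _, fun c hc => ?_, rfl, ?_⟩
    · exact mem_erase.2 ⟨fun h => Perm.mem_support.1 hc (h ▸ hi), hc⟩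
    · rw [hhand, hi, ← potential_pnsStep, pnsStep_pnsStep_self, potential_resting]
      simp
  · set σ := swap (ρ i) (ρ (ρ i)) * ρ
    have hρi : ρ (ρ i) ≠ ρ i := fun h => hi (ρ.injective h)
    obtain ⟨plan, ρ', hexec, hsupp, hlast, htravel⟩ :=
      ih _ (hk ▸ Perm.card_support_swap_mul hρi) σ (ρ i) rfl
    refine ⟨ρ i :: plan, ρ', ?_, ?_, ?_, ?_⟩
    · rw [pnsExec_cons, pnsStep_pnsStep_resting ρ hi, hexec]
    · exact hsupp.trans (erase_subset_erase _ fun c hc =>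
        (Perm.mem_support_swap_mul_imp_mem_support_ne hc).1)
    · rwa [List.getLastD_cons]
    · rw [travelFrom_cons, add_assoc, htravel, hhand, ← pnsStep_pnsStep_resting ρ hi,
        potential_pnsStep]

/-- Sweep from left to right, resolving the cycle of each misplaced cell in turn: the empty-handed
moves add up to at most `m - 1 - p`. -/
theorem exists_plan_sorting (ρ : Perm (Fin m)) (p : Fin m) (hp : ∀ c ∈ ρ.support, p ≤ c) :
    ∃ plan : List (Fin m), pnsExec (resting ρ) plan = resting 1 ∧
      travelFrom p plan + p ≤ totalDisplacement ρ + (m - 1) := by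
  induction hk : #ρ.support using Nat.strong_induction_on generalizing ρ p with
  | _ k ih =>
  rcases ρ.support.eq_empty_or_nonempty with hempty | hne
  · rw [Perm.support_eq_empty_iff] at hempty
    subst hempty
    refine ⟨[], rfl, ?_⟩
    simp only [travelFrom_nil, totalDisplacement_one]
    omega
  · set c := ρ.support.min' hne
    obtain ⟨plan, ρ', hexec, hsupp, hlast, htravel⟩ := exists_plan_resolving_cycle ρ c c
    have hcard : #ρ'.support < k :=
      hk ▸ (card_le_card hsupp).trans_lt (card_erase_lt_of_mem (min'_mem _ _))
    obtain ⟨rest, hrest, hcost⟩ := ih _ hcard ρ' c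
      (fun d hd => min'_le _ _ (mem_of_mem_erase (hsupp hd))) rfl
    refine ⟨c :: (plan ++ rest), ?_, ?_⟩
    · rw [pnsExec_cons, pnsExec_append, hexec, hrest]
    · have hpc : (p : ℤ) ≤ c := by exact_mod_cast hp c (min'_mem _ _)
      rw [← potential_pnsStep, pnsStep_pnsStep_self, potential_resting] at htravel
      rw [travelFrom_cons, travelFrom_append, hlast, abs_of_nonpos (by omega)]
      omega

theorem exists_validPlan_travel1D_le (hm : 0 < m) (π : Perm (Fin m)) :
    ∃ plan, ValidPlan π plan ∧ travel1D hm plan ≤ totalDisplacement π + 2 * (m - 1) := by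
  obtain ⟨plan, hvalid, htravel⟩ :=
    exists_plan_sorting π ⟨0, hm⟩ (fun c _ => Nat.zero_le c)
  refine ⟨plan, hvalid, ?_⟩
  have hlast : ((plan.getLastD ⟨0, hm⟩ : ℕ) : ℤ) < m := by exact_mod_cast (plan.getLastD _).isLt
  rw [travel1D_eq_travelFrom]
  simp only [Nat.cast_zero, add_zero] at htravel
  omega

theorem totalDisplacement_le_optTravel1D (hm : 0 < m) (π : Perm (Fin m)) :
    (totalDisplacement π : ℝ) ≤ optTravel1D hm π := by
  obtain ⟨plan, hplan, -⟩ := exists_validPlan_travel1D_le hm π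
  refine le_csInf ⟨_, plan, hplan, rfl⟩ ?_
  rintro _ ⟨plan, hplan, rfl⟩
  exact_mod_cast totalDisplacement_le_travel1D hm hplan

theorem optTravel1D_le (hm : 0 < m) (π : Perm (Fin m)) :
    optTravel1D hm π ≤ totalDisplacement π + 2 * ((m : ℝ) - 1) := by
  obtain ⟨plan, hplan, htravel⟩ := exists_validPlan_travel1D_le hm π
  have hbdd : BddBelow {d : ℝ | ∃ plan : List (Fin m), ValidPlan π plan ∧
      ((travel1D hm plan : ℤ) : ℝ) = d} := by
    refine ⟨totalDisplacement π, ?_⟩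
    rintro _ ⟨plan, hplan, rfl⟩
    exact_mod_cast totalDisplacement_le_travel1D hm hplan
  refine (csInf_le hbdd ⟨plan, hplan, rfl⟩).trans ?_
  exact_mod_cast htravel

theorem sum_perm_apply_eq_factorial_smul {M : Type*} [AddCommMonoid M] (n : ℕ) (i : Fin (n + 1))
    (f : Fin (n + 1) → M) :
    ∑ σ : Perm (Fin (n + 1)), f (σ i) = n ! • ∑ j, f j := by
  rw [← Equiv.sum_comp (Equiv.mulRight (swap 0 i)), ← Equiv.sum_comp Perm.decomposeFin.symm,
    Fintype.sum_prod_type, smul_sum]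
  simp [Perm.mul_apply, Perm.decomposeFin_symm_apply_zero, Fintype.card_perm]

theorem sum_range_sum_range_abs_sub_mul_three (k : ℕ) :
    (∑ i ∈ range k, ∑ j ∈ range k, |(i : ℤ) - j|) * 3 = k ^ 3 - k := by
  induction k with
  | zero => simp
  | succ k ih =>
    have hgauss : (∑ i ∈ range k, (i : ℤ)) * 2 = k * (k - 1) := by
      clear ih
      induction k with
      | zero => simp
      | succ k ih => rw [sum_range_succ, add_mul, ih]; push_cast; ring
    have hlast : ∑ i ∈ range k, |(k : ℤ) - i| = ∑ i ∈ range k, ((k : ℤ) - i) :=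
      sum_congr rfl fun i hi => abs_of_nonneg (by simpa using (mem_range.1 hi).le)
    simp only [sum_range_succ, sum_add_distrib]
    simp_rw [abs_sub_comm (_ : ℤ) (k : ℤ)]
    rw [hlast, sum_sub_distrib]
    simp only [sum_const, card_range, nsmul_eq_mul, sub_self, abs_zero, add_zero]
    push_cast
    linear_combination ih - 3 * hgauss

theorem sum_totalDisplacement_mul_three (n : ℕ) :
    (∑ π : Perm (Fin (n + 1)), totalDisplacement π) * 3 = (n + 1)! * ((n + 1) ^ 2 - 1) := by
  have hrange :
      (∑ i : Fin (n + 1), ∑ j : Fin (n + 1), |(i : ℤ) - j|) * 3 = (n + 1) ^ 3 - (n + 1) := by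
    rw [← Nat.cast_succ, ← sum_range_sum_range_abs_sub_mul_three, ← Fin.sum_univ_eq_sum_range]
    exact congrArg (· * 3) (sum_congr rfl fun i _ =>
      Fin.sum_univ_eq_sum_range (fun j : ℕ => |((i : ℕ) : ℤ) - j|) _)
  unfold totalDisplacement
  rw [sum_comm,
    sum_congr rfl fun i _ => sum_perm_apply_eq_factorial_smul n i (fun j => |(i : ℤ) - j|),
    ← smul_sum, nsmul_eq_mul, mul_assoc, hrange, factorial_succ]
  push_cast
  ring

theorem sum_optTravel1D_bounds (n : ℕ) :
    (n + 1)! * (((n + 1 : ℕ) : ℝ) ^ 2 - 1) / 3 ≤ ∑ π, optTravel1D (succ_pos n) π ∧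
      ∑ π, optTravel1D (succ_pos n) π ≤
        (n + 1)! * (((n + 1 : ℕ) : ℝ) ^ 2 - 1) / 3 + (n + 1)! * (2 * (((n + 1 : ℕ) : ℝ) - 1)) := by
  have hsum : ((∑ π : Perm (Fin (n + 1)), totalDisplacement π : ℤ) : ℝ) =
      (n + 1)! * (((n + 1 : ℕ) : ℝ) ^ 2 - 1) / 3 := by
    rw [eq_div_iff three_ne_zero]
    exact_mod_cast sum_totalDisplacement_mul_three n
  constructor
  · rw [← hsum, Int.cast_sum]
    exact sum_le_sum fun π _ => totalDisplacement_le_optTravel1D _ π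
  · refine (sum_le_sum fun π _ => optTravel1D_le (succ_pos n) π).trans_eq ?_
    rw [sum_add_distrib, ← Int.cast_sum, hsum, sum_const, Finset.card_univ, Fintype.card_perm,
      Fintype.card_fin, nsmul_eq_mul]

theorem normalized_sum_optTravel1D_bounds (n : ℕ) :
    1 / 3 - ((n + 1 : ℕ) : ℝ)⁻¹ ^ 2 / 3 ≤
        1 / ((n + 1)! * ((n + 1 : ℕ) : ℝ) ^ 2) * ∑ π, optTravel1D (succ_pos n) π ∧
      1 / ((n + 1)! * ((n + 1 : ℕ) : ℝ) ^ 2) * ∑ π, optTravel1D (succ_pos n) π ≤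
        1 / 3 + 2 * ((n + 1 : ℕ) : ℝ)⁻¹ - 7 / 3 * ((n + 1 : ℕ) : ℝ)⁻¹ ^ 2 := by
  obtain ⟨hlo, hhi⟩ := sum_optTravel1D_bounds n
  have hx : ((n + 1 : ℕ) : ℝ) ≠ 0 := by positivity
  have hpos : (0 : ℝ) < (n + 1)! * ((n + 1 : ℕ) : ℝ) ^ 2 := by positivity
  rw [one_div_mul_eq_div, le_div_iff₀ hpos, div_le_iff₀ hpos]
  constructor
  · refine Eq.trans_le ?_ hlo
    field_simp
  · refine hhi.trans_eq ?_
    field_simp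
    ring

end PickNSwap

open PickNSwap in
/-- The expected optimal end-effector travel for a uniformly random permutation of
`Fin m`, normalized by `m²`, converges to `1/3` as `m → ∞`. -/
theorem expected_opt_travel_1D_tendsto :
    Filter.Tendsto (fun m : ℕ =>
      (1 / ((Nat.factorial (m + 1) : ℝ) * ((m + 1 : ℕ) : ℝ) ^ 2)) *
        ∑ π : Equiv.Perm (Fin (m + 1)), optTravel1D (Nat.succ_pos m) π)
      Filter.atTop (nhds (1 / 3)) := by
  set u : ℕ → ℝ := fun m => ((m + 1 : ℕ) : ℝ)⁻¹
  have hu : Filter.Tendsto u Filter.atTop (nhds 0) :=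
    tendsto_inv_atTop_nhds_zero_nat.comp (Filter.tendsto_add_atTop_nat 1)
  refine tendsto_of_tendsto_of_tendsto_of_le_of_le (g := fun m => 1 / 3 - u m ^ 2 / 3)
    (h := fun m => 1 / 3 + 2 * u m - 7 / 3 * u m ^ 2) ?_ ?_
    (fun m => (normalized_sum_optTravel1D_bounds m).1)
    (fun m => (normalized_sum_optTravel1D_bounds m).2)
  · simpa using tendsto_const_nhds.sub ((hu.pow 2).div_const 3)
  · simpa using (tendsto_const_nhds.add (hu.const_mul 2)).sub ((hu.pow 2).const_mul (7 / 3))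
end

section
/- For every m₁, m₂ ≥ 1, the expected total Euclidean displacement of a uniformly random permutation π of the cells of an m₁ × m₂ lattice satisfies (1/(m₁m₂)!) · Σ_{π ∈ Equiv.Perm (Fin m₁ × Fin m₂)} Σ_{p} dist(π p, p) ≥ m₂ · (m₁² − 1)/3, where dist((r,c),(r',c')) = √(((r:ℕ) − (r':ℕ))² + ((c:ℕ) − (c':ℕ))²). -/
/-!
Each cell's Euclidean displacement is at least its row displacement. For a fixed cell `p`, `π p`
is uniformly distributed over the `m₁ m₂` cells (composing `π` with a transposition moves `π p` to
any `π q`), so the expected total row displacement is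
`∑ p, ∑ q, |q.1 - p.1| / (m₁ m₂) = m₂² · ∑ i < m₁, ∑ j < m₁, |i - j| / (m₁ m₂)`, and
`∑ i < n, ∑ j < n, |i - j| = n (n² - 1) / 3`.
-/

open Finset

/-- Euclidean distance between two cells of an `m₁ × m₂` lattice. -/
noncomputable def dist2D {m₁ m₂ : ℕ} (p q : Fin m₁ × Fin m₂) : ℝ :=
  Real.sqrt ((((p.1 : ℕ) : ℝ) - ((q.1 : ℕ) : ℝ)) ^ 2 +
    (((p.2 : ℕ) : ℝ) - ((q.2 : ℕ) : ℝ)) ^ 2)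

section PermSum

variable {α M : Type*} [Fintype α] [DecidableEq α] [AddCommMonoid M]

theorem sum_perm_apply_eq_sum_perm_apply (f : α → M) (p q : α) :
    ∑ π : Equiv.Perm α, f (π p) = ∑ π : Equiv.Perm α, f (π q) :=
  (Equiv.sum_comp (Equiv.mulRight (Equiv.swap q p)) _).symm.trans <| by
    simp [Equiv.swap_apply_right]

theorem card_nsmul_sum_perm_apply (f : α → M) (p : α) :
    Fintype.card α • ∑ π : Equiv.Perm α, f (π p) = (Fintype.card α).factorial • ∑ q, f q :=
  calc Fintype.card α • ∑ π : Equiv.Perm α, f (π p)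
      = ∑ q : α, ∑ π : Equiv.Perm α, f (π q) := by
        rw [← card_univ, ← sum_const]
        exact sum_congr rfl fun q _ => sum_perm_apply_eq_sum_perm_apply f p q
    _ = ∑ π : Equiv.Perm α, ∑ q, f q := by
        rw [sum_comm]
        exact sum_congr rfl fun π _ => Equiv.sum_comp π f
    _ = (Fintype.card α).factorial • ∑ q, f q := by
        rw [sum_const, card_univ, Fintype.card_perm]

theorem card_nsmul_sum_perm_sum_apply (f : α → α → M) :
    Fintype.card α • ∑ π : Equiv.Perm α, ∑ p, f (π p) p =
      (Fintype.card α).factorial • ∑ p, ∑ q, f q p := by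
  rw [sum_comm, smul_sum, smul_sum]
  exact sum_congr rfl fun p _ => card_nsmul_sum_perm_apply (f · p) p

end PermSum

theorem sum_range_natCast_sub_natCast (n : ℕ) :
    ∑ i ∈ range n, ((n : ℝ) - i) = n * (n + 1) / 2 := by
  induction n with
  | zero => simp
  | succ n ih =>
    simp only [sum_range_succ, Nat.cast_succ, add_sub_right_comm _ (1 : ℝ), sum_add_distrib, ih,
      sum_const, card_range, nsmul_eq_mul]
    ring

theorem sum_range_sum_range_abs_sub (n : ℕ) :
    ∑ i ∈ range n, ∑ j ∈ range n, |(i : ℝ) - j| = n * (n ^ 2 - 1) / 3 := by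
  induction n with
  | zero => simp
  | succ n ih =>
    have hlt : ∀ i ∈ range n, |(i : ℝ) - n| = n - i := fun i hi => by
      rw [abs_sub_comm, abs_of_nonneg (sub_nonneg.2 (by exact_mod_cast (mem_range.1 hi).le))]
    simp only [sum_range_succ, sum_add_distrib, ih, sum_congr rfl hlt, abs_sub_comm (n : ℝ),
      sum_range_natCast_sub_natCast, sub_self, abs_zero, Nat.cast_succ]
    ring

theorem sum_sum_abs_sub_fst {m₁ m₂ : ℕ} :
    ∑ p : Fin m₁ × Fin m₂, ∑ q : Fin m₁ × Fin m₂, |((q.1 : ℕ) : ℝ) - ((p.1 : ℕ) : ℝ)| =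
      m₂ ^ 2 * (m₁ * (m₁ ^ 2 - 1) / 3) := by
  simp only [Fintype.sum_prod_type, sum_const, card_univ, Fintype.card_fin, nsmul_eq_mul,
    ← mul_sum]
  rw [sum_comm, ← sum_range_sum_range_abs_sub, ← Fin.sum_univ_eq_sum_range]
  simp only [← Fin.sum_univ_eq_sum_range (fun j => |(_ : ℝ) - j|)]
  ring

theorem abs_sub_fst_le_dist2D {m₁ m₂ : ℕ} (p q : Fin m₁ × Fin m₂) :
    |((p.1 : ℕ) : ℝ) - ((q.1 : ℕ) : ℝ)| ≤ dist2D p q :=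
  Real.abs_le_sqrt (le_add_of_nonneg_right (sq_nonneg _))

/-- The expected total Euclidean displacement of a uniformly random permutation of
the cells of an `m₁ × m₂` lattice is at least `m₂ · (m₁² − 1)/3`. -/
theorem expected_displacement_2D_lower {m₁ m₂ : ℕ} (h₁ : 1 ≤ m₁) (h₂ : 1 ≤ m₂) :
    (m₂ : ℝ) * ((m₁ : ℝ) ^ 2 - 1) / 3 ≤
      (1 / (Nat.factorial (m₁ * m₂) : ℝ)) *
        ∑ π : Equiv.Perm (Fin m₁ × Fin m₂), ∑ p : Fin m₁ × Fin m₂, dist2D (π p) p := by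
  set rowSum := ∑ π : Equiv.Perm (Fin m₁ × Fin m₂), ∑ p : Fin m₁ × Fin m₂,
    |(((π p).1 : ℕ) : ℝ) - ((p.1 : ℕ) : ℝ)|
  have hrow : ((m₁ * m₂ : ℕ) : ℝ) * rowSum =
      (m₁ * m₂).factorial * (m₂ ^ 2 * (m₁ * (m₁ ^ 2 - 1) / 3)) := by
    have h := card_nsmul_sum_perm_sum_apply (M := ℝ)
      fun q p : Fin m₁ × Fin m₂ => |((q.1 : ℕ) : ℝ) - ((p.1 : ℕ) : ℝ)|
    rwa [Fintype.card_prod, Fintype.card_fin, Fintype.card_fin, sum_sum_abs_sub_fst,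
      nsmul_eq_mul, nsmul_eq_mul] at h
  have hN : ((m₁ * m₂ : ℕ) : ℝ) ≠ 0 := Nat.cast_ne_zero.2 (Nat.mul_pos h₁ h₂).ne'
  rw [one_div_mul_eq_div, le_div_iff₀ (by positivity)]
  calc (m₂ : ℝ) * ((m₁ : ℝ) ^ 2 - 1) / 3 * (m₁ * m₂).factorial = rowSum := by
        refine mul_left_cancel₀ hN (hrow.trans ?_).symm
        push_cast
        ring
    _ ≤ _ := sum_le_sum fun π _ => sum_le_sum fun p _ => abs_sub_fst_le_dist2D (π p) p
end
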